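/- Let d ≥ 1 be an integer and let H1, H2 ∈ (0,1) satisfy d < 1/H1 + 1/H2. Then the integral ∫₀¹ dt ∫₀^t dt' ∫₀¹ ds ∫₀^s ds' ( φ_{H1}(t, t') + φ_{H2}(s, s') )^{−d/2} is finite. -/

import Mathlib

open MeasureTheory Set

/-! Writing `x = u^H`, `y = v^H`, `z = (u-v)^H`, Heron's factorisation gives
`4 φ_H(u,v) = (y+z-x)(x+z-y)(x+y-z)(x+y+z)`, and concavity of `r ↦ r^H` gives
`x ≤ max(y,z) + H·min(y,z)`, whence `φ_H(u,v) ≥ (1-H)/4 · (v(u-v))^{2H}`.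
With the weight `a = H₂/(H₁+H₂)`, the bound `P + Q ≥ P^a Q^{1-a}` then dominates the integrand by
`C (t'(t-t'))^{-γ} (s'(s-s'))^{-γ}` with `γ = d H₁H₂/(H₁+H₂)`, and `γ < 1` is exactly
`d < 1/H₁ + 1/H₂`. Finally `∫₀^t (v(t-v))^{-γ} dv ≲ t^{1-2γ}`, which is integrable on `(0,1]`. -/

/-- `φ_H(u,v) := u^{2H} v^{2H} - (1/4)(u^{2H} + v^{2H} - |u-v|^{2H})²`. -/
noncomputable def phi (H u v : ℝ) : ℝ :=
  u ^ (2 * H) * v ^ (2 * H) - 1/4 * (u ^ (2 * H) + v ^ (2 * H) - |u - v| ^ (2 * H)) ^ 2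

lemma rpow_add_le_add_mul_rpow {H v w : ℝ} (hH0 : 0 ≤ H) (hH1 : H ≤ 1) (hv : 0 < v)
    (hvw : v ≤ w) : (v + w) ^ H ≤ w ^ H + H * v ^ H := by
  have hw : 0 < w := hv.trans_le hvw
  have bernoulli : (1 + v / w) ^ H ≤ 1 + H * (v / w) :=
    rpow_one_add_le_one_add_mul_self (by linarith [div_nonneg hv.le hw.le]) hH0 hH1
  have hvw' : v * w ^ (H - 1) ≤ v ^ H := by
    calc v * w ^ (H - 1) ≤ v * v ^ (H - 1) :=
          mul_le_mul_of_nonneg_left (Real.rpow_le_rpow_of_nonpos hv hvw (by linarith)) hv.le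
      _ = v ^ H := by rw [Real.rpow_sub hv, Real.rpow_one]; field_simp
  calc (v + w) ^ H = w ^ H * (1 + v / w) ^ H := by
        rw [← Real.mul_rpow hw.le (by positivity)]; field_simp; ring_nf
    _ ≤ w ^ H * (1 + H * (v / w)) := by gcongr
    _ = w ^ H + H * (v * w ^ (H - 1)) := by rw [Real.rpow_sub hw, Real.rpow_one]; field_simp
    _ ≤ w ^ H + H * v ^ H := by gcongr

lemma heron_lower_bound {H x y z : ℝ} (hH : H ≤ 1) (hy : 0 ≤ y) (hz : 0 ≤ z) (hyx : y ≤ x)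
    (hzx : z ≤ x) (hx : x ≤ z + H * y) :
    (1 - H) * (y * z) ^ 2 ≤ (y + z - x) * (x + z - y) * (x + y - z) * (x + y + z) := by
  have hdefect : (1 - H) * y ≤ y + z - x := by linarith
  have h0 : 0 ≤ (1 - H) * y := mul_nonneg (by linarith) hy
  have hAB : (1 - H) * y * z ≤ (y + z - x) * (x + z - y) :=
    mul_le_mul hdefect (by linarith) hz (h0.trans hdefect)
  have hCD : y * z ≤ (x + y - z) * (x + y + z) :=
    mul_le_mul (by linarith) (by linarith) hz (by linarith)
  calc (1 - H) * (y * z) ^ 2 = (1 - H) * y * z * (y * z) := by ring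
    _ ≤ (y + z - x) * (x + z - y) * ((x + y - z) * (x + y + z)) :=
        mul_le_mul hAB hCD (by positivity) ((mul_nonneg h0 hz).trans hAB)
    _ = (y + z - x) * (x + z - y) * (x + y - z) * (x + y + z) := by ring

lemma phi_eq_heron {H u v : ℝ} (hv : 0 ≤ v) (hvu : v ≤ u) :
    phi H u v = (v ^ H + (u - v) ^ H - u ^ H) * (u ^ H + (u - v) ^ H - v ^ H)
      * (u ^ H + v ^ H - (u - v) ^ H) * (u ^ H + v ^ H + (u - v) ^ H) / 4 := by
  have sq : ∀ r : ℝ, 0 ≤ r → r ^ (2 * H) = (r ^ H) ^ 2 := fun r hr => by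
    rw [mul_comm, Real.rpow_mul hr, Real.rpow_two]
  rw [phi, abs_of_nonneg (sub_nonneg.2 hvu), sq u (hv.trans hvu), sq v hv,
    sq (u - v) (sub_nonneg.2 hvu)]
  ring

lemma mul_rpow_le_phi {H u v : ℝ} (hH0 : 0 ≤ H) (hH1 : H ≤ 1) (hv : 0 < v) (hvu : v < u) :
    (1 - H) / 4 * (v * (u - v)) ^ (2 * H) ≤ phi H u v := by
  have hw : 0 < u - v := sub_pos.2 hvu
  have hy : v ^ H ≤ u ^ H := Real.rpow_le_rpow hv.le hvu.le hH0
  have hz : (u - v) ^ H ≤ u ^ H := Real.rpow_le_rpow hw.le (by linarith) hH0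
  have hlhs : (v * (u - v)) ^ (2 * H) = (v ^ H * (u - v) ^ H) ^ 2 := by
    rw [Real.mul_rpow hv.le hw.le, mul_comm 2 H, Real.rpow_mul hv.le, Real.rpow_mul hw.le,
      Real.rpow_two, Real.rpow_two]; ring
  rw [phi_eq_heron hv.le hvu.le, hlhs]
  rcases le_total v (u - v) with hc | hc
  · have := heron_lower_bound hH1 (by positivity) (by positivity) hy hz
      (by simpa using rpow_add_le_add_mul_rpow hH0 hH1 hv hc)
    linarith
  · have := heron_lower_bound hH1 (by positivity) (by positivity) hz hy
      (by simpa using rpow_add_le_add_mul_rpow hH0 hH1 hw hc)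
    linarith

lemma rpow_neg_add_le {x y a r : ℝ} (hx : 0 < x) (hy : 0 < y) (ha0 : 0 ≤ a) (ha1 : a ≤ 1)
    (hr : 0 ≤ r) : (x + y) ^ (-r) ≤ x ^ (-(a * r)) * y ^ (-((1 - a) * r)) := by
  have hgm : x ^ a * y ^ (1 - a) ≤ x + y := by
    have := Real.geom_mean_le_arith_mean2_weighted ha0 (sub_nonneg.2 ha1) hx.le hy.le
      (add_sub_cancel a 1)
    nlinarith
  calc (x + y) ^ (-r) ≤ (x ^ a * y ^ (1 - a)) ^ (-r) :=
        Real.rpow_le_rpow_of_nonpos (by positivity) hgm (by linarith)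
    _ = x ^ (-(a * r)) * y ^ (-((1 - a) * r)) := by
        rw [Real.mul_rpow (by positivity) (by positivity), ← Real.rpow_mul hx.le,
          ← Real.rpow_mul hy.le]
        ring_nf

lemma setLIntegral_Ioc_comp_sub_left (f : ℝ → ENNReal) (t : ℝ) :
    ∫⁻ v in Ioc 0 t, f (t - v) = ∫⁻ v in Ioc 0 t, f v := by
  have hpre : (t - ·) ⁻¹' Ico 0 t = Ioc 0 t := by
    ext v
    simp only [mem_preimage, mem_Ico, mem_Ioc]
    constructor <;> intro h <;> constructor <;> linarith [h.1, h.2]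
  calc ∫⁻ v in Ioc 0 t, f (t - v) = ∫⁻ v in (t - ·) ⁻¹' Ico 0 t, f (t - v) := by rw [hpre]
    _ = ∫⁻ v in Ico 0 t, f v :=
        (Measure.measurePreserving_sub_left volume t).setLIntegral_comp_preimage_emb
          (MeasurableEquiv.subLeft t).measurableEmbedding _ _
    _ = ∫⁻ v in Ioc 0 t, f v := setLIntegral_congr Ico_ae_eq_Ioc

lemma setLIntegral_Ioc_rpow_neg {γ t : ℝ} (hγ : γ < 1) (ht : 0 ≤ t) :
    ∫⁻ v in Ioc 0 t, ENNReal.ofReal (v ^ (-γ)) = ENNReal.ofReal (t ^ (1 - γ) / (1 - γ)) := by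
  have hint : IntegrableOn (fun v : ℝ => v ^ (-γ)) (Ioc 0 t) :=
    (intervalIntegral.intervalIntegrable_rpow' (by linarith)).1
  rw [← ofReal_integral_eq_lintegral_ofReal hint
    ((ae_restrict_mem measurableSet_Ioc).mono fun v hv => Real.rpow_nonneg hv.1.le _),
    ← intervalIntegral.integral_of_le ht, integral_rpow (Or.inl (by linarith)),
    Real.zero_rpow (by linarith), sub_zero, neg_add_eq_sub]

lemma mul_rpow_neg_le {v w γ : ℝ} (hv : 0 < v) (hw : 0 < w) (hγ : 0 ≤ γ) :
    (v * w) ^ (-γ) ≤ ((v + w) / 2) ^ (-γ) * (v ^ (-γ) + w ^ (-γ)) := by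
  have hv' : 0 ≤ v ^ (-γ) := Real.rpow_nonneg hv.le _
  have hw' : 0 ≤ w ^ (-γ) := Real.rpow_nonneg hw.le _
  rw [Real.mul_rpow hv.le hw.le]
  rcases le_total v w with h | h
  · have : w ^ (-γ) ≤ ((v + w) / 2) ^ (-γ) :=
      Real.rpow_le_rpow_of_nonpos (by positivity) (by linarith) (by linarith)
    nlinarith
  · have : v ^ (-γ) ≤ ((v + w) / 2) ^ (-γ) :=
      Real.rpow_le_rpow_of_nonpos (by positivity) (by linarith) (by linarith)
    nlinarith

lemma ae_restrict_Ioc_mem_Ioo (a b : ℝ) : ∀ᵐ x ∂volume.restrict (Ioc a b), x ∈ Ioo a b := by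
  rw [← Measure.restrict_congr_set Ioo_ae_eq_Ioc]
  exact ae_restrict_mem measurableSet_Ioo

lemma setLIntegral_Ioc_mul_sub_rpow_neg_le {γ t : ℝ} (hγ0 : 0 ≤ γ) (hγ1 : γ < 1) (ht : 0 < t) :
    ∫⁻ v in Ioc 0 t, ENNReal.ofReal ((v * (t - v)) ^ (-γ))
      ≤ ENNReal.ofReal (2 ^ (1 + γ) / (1 - γ) * t ^ (1 - 2 * γ)) := by
  have hpt : ∀ᵐ v ∂volume.restrict (Ioc 0 t), ENNReal.ofReal ((v * (t - v)) ^ (-γ)) ≤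
      ENNReal.ofReal ((t / 2) ^ (-γ)) *
        (ENNReal.ofReal (v ^ (-γ)) + ENNReal.ofReal ((t - v) ^ (-γ))) := by
    filter_upwards [ae_restrict_Ioc_mem_Ioo 0 t] with v hv
    rw [← ENNReal.ofReal_add (Real.rpow_nonneg hv.1.le _)
      (Real.rpow_nonneg (sub_pos.2 hv.2).le _), ← ENNReal.ofReal_mul (by positivity)]
    refine ENNReal.ofReal_le_ofReal ?_
    simpa using mul_rpow_neg_le hv.1 (sub_pos.2 hv.2) hγ0
  have hval : (t / 2) ^ (-γ) * (t ^ (1 - γ) / (1 - γ) + t ^ (1 - γ) / (1 - γ))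
      = 2 ^ (1 + γ) / (1 - γ) * t ^ (1 - 2 * γ) := by
    rw [Real.div_rpow ht.le zero_le_two, Real.rpow_add two_pos, Real.rpow_one,
      show 1 - 2 * γ = -γ + (1 - γ) by ring, Real.rpow_add ht, Real.rpow_neg zero_le_two]
    have : (2:ℝ) ^ γ ≠ 0 := by positivity
    have : 1 - γ ≠ 0 := by linarith
    field_simp
    ring
  calc ∫⁻ v in Ioc 0 t, ENNReal.ofReal ((v * (t - v)) ^ (-γ))
      ≤ ∫⁻ v in Ioc 0 t, ENNReal.ofReal ((t / 2) ^ (-γ)) *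
          (ENNReal.ofReal (v ^ (-γ)) + ENNReal.ofReal ((t - v) ^ (-γ))) := lintegral_mono_ae hpt
    _ = ENNReal.ofReal ((t / 2) ^ (-γ)) * (ENNReal.ofReal (t ^ (1 - γ) / (1 - γ)) +
          ENNReal.ofReal (t ^ (1 - γ) / (1 - γ))) := by
        rw [lintegral_const_mul' _ _ ENNReal.ofReal_ne_top, lintegral_add_left (by fun_prop),
          setLIntegral_Ioc_comp_sub_left (fun v => ENNReal.ofReal (v ^ (-γ))),
          setLIntegral_Ioc_rpow_neg hγ1 ht.le]
    _ = _ := by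
        rw [← ENNReal.ofReal_add (by positivity) (by positivity),
          ← ENNReal.ofReal_mul (by positivity), hval]

lemma lintegral_lintegral_Ioc_mul_sub_rpow_neg_lt_top {C γ : ℝ} (hC : 0 ≤ C) (hγ0 : 0 ≤ γ)
    (hγ1 : γ < 1) :
    ∫⁻ t in Ioc 0 1, ∫⁻ v in Ioc 0 t, ENNReal.ofReal (C * (v * (t - v)) ^ (-γ)) < ⊤ := by
  have hint : IntegrableOn (fun t : ℝ => C * (2 ^ (1 + γ) / (1 - γ) * t ^ (1 - 2 * γ)))
      (Ioc 0 1) :=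
    ((intervalIntegral.intervalIntegrable_rpow' (by linarith)).1.const_mul _).const_mul _
  refine lt_of_le_of_lt (setLIntegral_mono' measurableSet_Ioc fun t ht => ?_)
    hint.setLIntegral_lt_top
  simp_rw [ENNReal.ofReal_mul hC]
  rw [lintegral_const_mul' _ _ ENNReal.ofReal_ne_top]
  exact mul_le_mul_right (setLIntegral_Ioc_mul_sub_rpow_neg_le hγ0 hγ1 ht.1) _

lemma rpow_neg_phi_add_phi_le {H1 H2 a r : ℝ} (h1 : H1 ∈ Ico 0 1) (h2 : H2 ∈ Ico 0 1)
    (ha0 : 0 ≤ a) (ha1 : a ≤ 1) (hr : 0 ≤ r) :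
    ∃ C1 C2 : ℝ, 0 ≤ C1 ∧ 0 ≤ C2 ∧ ∀ t t' s s' : ℝ, 0 < t' → t' < t → 0 < s' → s' < s →
      (phi H1 t t' + phi H2 s s') ^ (-r) ≤
        C1 * (t' * (t - t')) ^ (-(2 * H1 * a * r)) *
          (C2 * (s' * (s - s')) ^ (-(2 * H2 * (1 - a) * r))) := by
  have hc1 : 0 < (1 - H1) / 4 := by linarith [h1.2]
  have hc2 : 0 < (1 - H2) / 4 := by linarith [h2.2]
  refine ⟨((1 - H1) / 4) ^ (-(a * r)), ((1 - H2) / 4) ^ (-((1 - a) * r)), by positivity,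
    by positivity, fun t t' s s' ht' htt' hs' hss' => ?_⟩
  have hψ1 : 0 < t' * (t - t') := mul_pos ht' (sub_pos.2 htt')
  have hψ2 : 0 < s' * (s - s') := mul_pos hs' (sub_pos.2 hss')
  have hP : 0 < (1 - H1) / 4 * (t' * (t - t')) ^ (2 * H1) := mul_pos hc1 (by positivity)
  have hQ : 0 < (1 - H2) / 4 * (s' * (s - s')) ^ (2 * H2) := mul_pos hc2 (by positivity)
  calc (phi H1 t t' + phi H2 s s') ^ (-r)
      ≤ ((1 - H1) / 4 * (t' * (t - t')) ^ (2 * H1) + (1 - H2) / 4 * (s' * (s - s')) ^ (2 * H2))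
          ^ (-r) :=
        Real.rpow_le_rpow_of_nonpos (add_pos hP hQ)
          (add_le_add (mul_rpow_le_phi h1.1 h1.2.le ht' htt')
            (mul_rpow_le_phi h2.1 h2.2.le hs' hss')) (neg_nonpos.2 hr)
    _ ≤ ((1 - H1) / 4 * (t' * (t - t')) ^ (2 * H1)) ^ (-(a * r)) *
          ((1 - H2) / 4 * (s' * (s - s')) ^ (2 * H2)) ^ (-((1 - a) * r)) :=
        rpow_neg_add_le hP hQ ha0 ha1 hr
    _ = _ := by
        rw [Real.mul_rpow hc1.le (by positivity), Real.mul_rpow hc2.le (by positivity),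
          ← Real.rpow_mul hψ1.le, ← Real.rpow_mul hψ2.le]
        ring_nf

lemma lintegral_lintegral_lintegral_lintegral_mul {α β : Type*} [MeasurableSpace α]
    [MeasurableSpace β] {μ : Measure α} {ν : Measure β} {A : Set α} {B : α → Set α} {A' : Set β}
    {B' : β → Set β} {f : α → α → ENNReal} {g : β → β → ENNReal} (hf : ∀ x y, f x y ≠ ⊤)
    (hg : ∫⁻ s in A', ∫⁻ s' in B' s, g s s' ∂ν ∂ν ≠ ⊤) :
    ∫⁻ t in A, ∫⁻ t' in B t, ∫⁻ s in A', ∫⁻ s' in B' s, f t t' * g s s' ∂ν ∂ν ∂μ ∂μ =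
      (∫⁻ t in A, ∫⁻ t' in B t, f t t' ∂μ ∂μ) * ∫⁻ s in A', ∫⁻ s' in B' s, g s s' ∂ν ∂ν := by
  simp_rw [lintegral_const_mul' _ _ (hf _ _), lintegral_mul_const' _ _ hg]

theorem fourfold_integral_finite_general (d : ℕ) (H1 H2 : ℝ)
    (h1 : H1 ∈ Ioo (0:ℝ) 1) (h2 : H2 ∈ Ioo (0:ℝ) 1)
    (hcond : (d : ℝ) < 1 / H1 + 1 / H2) :
    (∫⁻ t in Ioc (0:ℝ) 1, ∫⁻ t' in Ioc (0:ℝ) t, ∫⁻ s in Ioc (0:ℝ) 1, ∫⁻ s' in Ioc (0:ℝ) s,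
        ENNReal.ofReal ((phi H1 t t' + phi H2 s s') ^ (-(d : ℝ) / 2))) < ⊤ := by
  obtain ⟨hH1, hH1'⟩ := h1
  obtain ⟨hH2, hH2'⟩ := h2
  have hH : 0 < H1 + H2 := add_pos hH1 hH2
  set γ := (d : ℝ) * H1 * H2 / (H1 + H2) with hγ
  have hγ0 : 0 ≤ γ := by positivity
  have hγ1 : γ < 1 := by
    rw [div_lt_one hH]
    rw [div_add_div _ _ hH1.ne' hH2.ne', lt_div_iff₀ (mul_pos hH1 hH2)] at hcond
    linarith
  obtain ⟨C1, C2, hC1, hC2, hbound⟩ := rpow_neg_phi_add_phi_le ⟨hH1.le, hH1'⟩ ⟨hH2.le, hH2'⟩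
    (a := H2 / (H1 + H2)) (r := d / 2) (by positivity) (div_le_one_of_le₀ (by linarith) hH.le)
    (by positivity)
  have e1 : 2 * H1 * (H2 / (H1 + H2)) * (d / 2) = γ := by rw [hγ]; field_simp
  have e2 : 2 * H2 * (1 - H2 / (H1 + H2)) * (d / 2) = γ := by rw [hγ]; field_simp; ring
  rw [e1, e2, ← neg_div] at hbound
  calc _ ≤ ∫⁻ t in Ioc (0:ℝ) 1, ∫⁻ t' in Ioc (0:ℝ) t, ∫⁻ s in Ioc (0:ℝ) 1, ∫⁻ s' in Ioc (0:ℝ) s,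
          ENNReal.ofReal (C1 * (t' * (t - t')) ^ (-γ)) *
            ENNReal.ofReal (C2 * (s' * (s - s')) ^ (-γ)) := by
        -- only almost everywhere: on the diagonal `t' = t` Lean's `0 ^ (-γ) = 0` breaks the bound
        refine lintegral_mono fun t => lintegral_mono_ae ?_
        filter_upwards [ae_restrict_Ioc_mem_Ioo 0 t] with t' ht'
        refine lintegral_mono fun s => lintegral_mono_ae ?_
        filter_upwards [ae_restrict_Ioc_mem_Ioo 0 s] with s' hs'
        rw [← ENNReal.ofReal_mul
          (mul_nonneg hC1 (Real.rpow_nonneg (mul_pos ht'.1 (sub_pos.2 ht'.2)).le _))]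
        exact ENNReal.ofReal_le_ofReal (hbound _ _ _ _ ht'.1 ht'.2 hs'.1 hs'.2)
    _ = _ := lintegral_lintegral_lintegral_lintegral_mul (fun _ _ => ENNReal.ofReal_ne_top)
        (lintegral_lintegral_Ioc_mul_sub_rpow_neg_lt_top hC2 hγ0 hγ1).ne
    _ < ⊤ := ENNReal.mul_lt_top (lintegral_lintegral_Ioc_mul_sub_rpow_neg_lt_top hC1 hγ0 hγ1)
        (lintegral_lintegral_Ioc_mul_sub_rpow_neg_lt_top hC2 hγ0 hγ1)

/-- For an integer `d ≥ 1` and `H1, H2 ∈ (0,1)` with `d < 1/H1 + 1/H2`,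
`∫₀¹ dt ∫₀^t dt' ∫₀¹ ds ∫₀^s ds' (φ_{H1}(t,t') + φ_{H2}(s,s'))^{-d/2} < ∞`. -/
theorem fourfold_integral_finite (d : ℕ) (hd : 1 ≤ d) (H1 H2 : ℝ)
    (h1 : H1 ∈ Ioo (0:ℝ) 1) (h2 : H2 ∈ Ioo (0:ℝ) 1)
    (hcond : (d : ℝ) < 1 / H1 + 1 / H2) :
    (∫⁻ t in Ioc (0:ℝ) 1, ∫⁻ t' in Ioc (0:ℝ) t, ∫⁻ s in Ioc (0:ℝ) 1, ∫⁻ s' in Ioc (0:ℝ) s,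
        ENNReal.ofReal ((phi H1 t t' + phi H2 s s') ^ (-(d : ℝ) / 2))) < ⊤ :=
  fourfold_integral_finite_general d H1 H2 h1 h2 hcond
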